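/- arXiv:2004.14160 — 4 statements merged into one kernel-verified Lean document; each statement's English description precedes it below -/
import Mathlib

section
/- For every natural number n ≥ 1 and every real x, w_n(x) = x * ∑_{k=1}^{n} S(n,k) * (-1)^{n+k} * k! * (x+1)^{k-1}, where w_n(x) = ∑_{k=0}^{n} k! * S(n,k) * x^k. -/
open Finset

def stirling2 : ℕ → ℕ → ℕ
  | 0, 0 => 1
  | 0, _ + 1 => 0
  | _ + 1, 0 => 0
  | n + 1, k + 1 => (k + 1) * stirling2 n (k + 1) + stirling2 n k

section Aux

open Polynomial

lemma stirling2_eq_zero : ∀ n k : ℕ, n < k → stirling2 n k = 0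
  | 0, _ + 1, _ => rfl
  | n + 1, k + 1, h => by
    have h1 : n < k + 1 := by omega
    have h2 : n < k := by omega
    simp [stirling2, stirling2_eq_zero n (k+1) h1, stirling2_eq_zero n k h2]

noncomputable def Wp (n : ℕ) : Polynomial ℝ :=
  ∑ k ∈ range (n + 1), C ((k.factorial : ℝ) * (stirling2 n k : ℝ)) * X ^ k

lemma Wp_coeff (n m : ℕ) : (Wp n).coeff m = (m.factorial : ℝ) * (stirling2 n m : ℝ) := by
  rw [Wp, finset_sum_coeff]
  simp only [coeff_C_mul, coeff_X_pow]
  rw [Finset.sum_eq_single m]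
  · simp
  · intro b _ hb; simp [Ne.symm hb]
  · intro hm
    simp only [mem_range, not_lt] at hm
    have : stirling2 n m = 0 := stirling2_eq_zero n m (by omega)
    simp [this]

lemma Wp_succ (n : ℕ) : Wp (n + 1) = X * derivative ((1 + X) * Wp n) := by
  ext m
  match m with
  | 0 =>
    have h0 : stirling2 (n+1) 0 = 0 := rfl
    simp [Wp_coeff, h0, mul_coeff_zero]
  | m + 1 =>
    rw [coeff_X_mul, coeff_derivative]
    have : ((1 + X) * Wp n).coeff (m + 1) = (Wp n).coeff (m + 1) + (Wp n).coeff m := by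
      rw [add_mul, one_mul, coeff_add, coeff_X_mul]
    rw [this, Wp_coeff, Wp_coeff, Wp_coeff]
    have hrec : stirling2 (n+1) (m+1) = (m + 1) * stirling2 n (m + 1) + stirling2 n m := rfl
    rw [hrec]
    push_cast [Nat.factorial_succ]
    ring

lemma Wp_symm : ∀ n : ℕ, 1 ≤ n →
    (1 + X) * Wp n = (-1) ^ (n + 1) * (((1 + X) * Wp n).comp (-1 - X)) := by
  intro n hn
  induction n with
  | zero => omega
  | succ n ih =>
    rcases Nat.eq_or_lt_of_le hn with h1 | h1
    · -- n + 1 = 1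
      have hn0 : n = 0 := by omega
      subst hn0
      have hW1 : Wp 1 = X := by
        ext m
        rw [Wp_coeff]
        match m with
        | 0 => simp [show stirling2 1 0 = 0 from rfl]
        | 1 => simp [show stirling2 1 1 = 1 from rfl]
        | m + 2 => simp [stirling2_eq_zero 1 (m+2) (by omega), coeff_X]
      rw [hW1]
      simp [mul_comp, add_comp, sub_comp]
      ring
    · have hn' : 1 ≤ n := by omega
      have IH := ih hn'
      have hC : ((-1 : Polynomial ℝ)) ^ (n + 1) = C ((-1 : ℝ) ^ (n + 1)) := by
        rw [map_pow, map_neg, map_one]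
      have hD : derivative ((1 + X) * Wp n)
          = (-1) ^ (n + 2) * (derivative ((1 + X) * Wp n)).comp (-1 - X) := by
        conv_lhs => rw [IH]
        rw [hC, derivative_C_mul, derivative_comp]
        rw [← hC]
        simp only [derivative_sub, derivative_X, derivative_neg, derivative_one, neg_zero,
          zero_sub]
        ring
      rw [show n + 1 + 1 = n + 2 from rfl, Wp_succ]
      have e1 : ((1 + X) * (X * derivative ((1 + X) * Wp n))).comp (-1 - X)
          = (X + X ^ 2) * (derivative ((1 + X) * Wp n)).comp (-1 - X) := by
        simp only [mul_comp, add_comp, sub_comp, X_comp, one_comp, neg_comp]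
        ring
      rw [e1]
      conv_lhs => rw [hD]
      ring

noncomputable def Qp (n : ℕ) : Polynomial ℝ :=
  ∑ k ∈ Icc 1 n,
    C ((stirling2 n k : ℝ) * (-1) ^ (n + k) * (k.factorial : ℝ)) * (1 + X) ^ (k - 1)

lemma Wp_eq_X_mul_Qp (n : ℕ) (hn : 1 ≤ n) : Wp n = X * Qp n := by
  have h1X : (1 + X : Polynomial ℝ) ≠ 0 := by
    intro h
    have := congrArg (fun p => Polynomial.eval 0 p) h
    simp at this
  apply mul_left_cancel₀ h1X
  rw [Wp_symm n hn]
  have hcomp : ((1 + X) * Wp n).comp (-1 - X)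
      = (-X) * ∑ k ∈ range (n + 1),
          C ((k.factorial : ℝ) * (stirling2 n k : ℝ)) * (-1 - X) ^ k := by
    rw [mul_comp, add_comp, one_comp, X_comp, Wp, Polynomial.sum_comp]
    simp only [mul_comp, C_comp, X_pow_comp]
    ring_nf
  rw [hcomp]
  have step1 : ∀ k : ℕ, (-1 : Polynomial ℝ) ^ (n + 1) * (-X)
        * (C ((k.factorial : ℝ) * (stirling2 n k : ℝ)) * (-1 - X) ^ k)
      = X * (C ((stirling2 n k : ℝ) * (-1 : ℝ) ^ (n + k) * (k.factorial : ℝ)) * (1 + X) ^ k) := by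
    intro k
    have h1 : (-1 - X : Polynomial ℝ) ^ k = (-1) ^ k * (1 + X) ^ k := by
      rw [← neg_pow]; ring_nf
    have h2 : C ((stirling2 n k : ℝ) * (-1 : ℝ) ^ (n + k) * (k.factorial : ℝ))
        = C ((stirling2 n k : ℝ)) * (-1) ^ (n + k) * C ((k.factorial : ℝ)) := by
      simp [map_mul, map_pow]
    rw [h1, h2, pow_add, map_mul]
    ring
  have hsum : (-1 : Polynomial ℝ) ^ (n + 1) * (-X * ∑ k ∈ range (n + 1),
        C ((k.factorial : ℝ) * (stirling2 n k : ℝ)) * (-1 - X) ^ k)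
      = ∑ k ∈ range (n + 1),
        X * (C ((stirling2 n k : ℝ) * (-1 : ℝ) ^ (n + k) * (k.factorial : ℝ)) * (1 + X) ^ k) := by
    rw [Finset.mul_sum, Finset.mul_sum]
    refine Finset.sum_congr rfl fun k _ => ?_
    rw [← mul_assoc]; exact step1 k
  rw [hsum]
  have hins : range (n + 1) = insert 0 (Icc 1 n) := by
    ext x; simp [Finset.mem_insert]; omega
  have h0 : (stirling2 n 0 : ℝ) = 0 := by
    obtain ⟨m, rfl⟩ := Nat.exists_eq_add_of_le hn
    norm_num [show stirling2 (1 + m) 0 = 0 by rw [Nat.add_comm]; rfl]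
  rw [hins, Finset.sum_insert (by simp)]
  rw [show X * (C ((stirling2 n 0 : ℝ) * (-1 : ℝ) ^ (n + 0) * ((Nat.factorial 0 : ℕ) : ℝ))
        * (1 + X) ^ 0) = 0 by simp [h0]]
  rw [zero_add, Qp, Finset.mul_sum, Finset.mul_sum]
  refine Finset.sum_congr rfl fun k hk => ?_
  have hk1 : 1 ≤ k := (Finset.mem_Icc.mp hk).1
  have hpow : (1 + X : Polynomial ℝ) ^ k = (1 + X) * (1 + X) ^ (k - 1) := by
    conv_lhs => rw [show k = (k - 1) + 1 by omega]
    rw [pow_succ]; ring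
  rw [hpow]
  ring

end Aux

noncomputable def w (n : ℕ) (x : ℝ) : ℝ :=
  ∑ k ∈ range (n + 1), (k.factorial : ℝ) * (stirling2 n k : ℝ) * x ^ k

theorem stmt2 (n : ℕ) (hn : 1 ≤ n) (x : ℝ) :
    w n x = x * ∑ k ∈ Icc 1 n,
      (stirling2 n k : ℝ) * (-1) ^ (n + k) * (k.factorial : ℝ) * (x + 1) ^ (k - 1) := by
  have hw : w n x = (Wp n).eval x := by
    rw [w, Wp, Polynomial.eval_finset_sum]
    simp
  rw [hw, Wp_eq_X_mul_Qp n hn, Polynomial.eval_mul, Polynomial.eval_X, Qp,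
    Polynomial.eval_finset_sum]
  congr 1
  refine Finset.sum_congr rfl fun k _ => ?_
  simp only [Polynomial.eval_mul, Polynomial.eval_C, Polynomial.eval_pow, Polynomial.eval_add,
    Polynomial.eval_one, Polynomial.eval_X]
  ring
end

section
/- With F̃_{m,a}(n;x) = ∑_{k=0}^{n} C(n,k) * m^k * w_k(x/m) * (-a)^{n-k} (the noncentral Tanny–Dowling polynomials, m ≠ 0), for all natural n and all real m ≠ 0, a, x: x * F̃_{m,a-m}(n;x) = (m+x) * F̃_{m,a}(n;x) - (-a)^n * m. -/
/-!
With `f k = m ^ k * w_k (x / m)`, `F̃_{m,a}(n; x) = ∑ C(n,k) f_k (-a)^(n-k)` is the binomial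
transform of `f` with shift `-a`. Binomial transforms compose by adding their shifts, so
`F̃_{m,a-m}` is the `(-a)`-transform of the `m`-transform of `f`. Counting surjections gives
`y ∑_j C(n,j) w_j(y) = (1 + y) w_n(y) - 0^n`, i.e. `x` times the `m`-transform of `f` is
`j ↦ (m + x) f_j - m 0^j`; and the `(-a)`-transform of `j ↦ 0^j` is `(-a)^n`.
-/

open Finset

noncomputable def Ft (m a : ℝ) (n : ℕ) (x : ℝ) : ℝ :=
  ∑ k ∈ range (n + 1), (n.choose k : ℝ) * m ^ k * w k (x / m) * (-a) ^ (n - k)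

section BinomialTransform

variable {R : Type*} [CommSemiring R]

-- `binomialTransform c f n = ((E + c) ^ n f) 0` for the shift `E f k = f (k + 1)`, which is why
-- shifts add under composition.
def binomialTransform (c : R) (f : ℕ → R) (n : ℕ) : R :=
  ∑ k ∈ range (n + 1), n.choose k * f k * c ^ (n - k)

theorem binomialTransform_mul_left (c r : R) (f : ℕ → R) (n : ℕ) :
    binomialTransform c (fun k => r * f k) n = r * binomialTransform c f n := by
  simp only [binomialTransform, mul_sum]
  exact sum_congr rfl fun _ _ => by ring

theorem binomialTransform_pow (b c : R) (n : ℕ) :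
    binomialTransform c (fun k => b ^ k) n = (b + c) ^ n := by
  rw [add_pow, binomialTransform]
  exact sum_congr rfl fun _ _ => by ring

theorem binomialTransform_binomialTransform (b c : R) (f : ℕ → R) (n : ℕ) :
    binomialTransform c (binomialTransform b f) n = binomialTransform (b + c) f n := by
  have hchoose (k i : ℕ) :
      (n.choose (k + i) * (k + i).choose k : R) = n.choose k * (n - k).choose i := by
    have h := Nat.choose_mul (n := n) (Nat.le_add_right k i)
    rw [Nat.add_sub_cancel_left] at h
    rw [← Nat.cast_mul, h, Nat.cast_mul]
  calc binomialTransform c (binomialTransform b f) n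
      = ∑ j ∈ range (n + 1), ∑ k ∈ range (j + 1),
          (n.choose (k + (j - k)) * (k + (j - k)).choose k : R) * f k * b ^ (j - k) *
            c ^ (n - k - (j - k)) := by
        refine sum_congr rfl fun j hj => ?_
        rw [binomialTransform, mul_sum, sum_mul]
        refine sum_congr rfl fun k hk => ?_
        rw [Nat.add_sub_cancel' (Nat.lt_succ_iff.mp (mem_range.mp hk)),
          Nat.sub_sub, Nat.add_sub_cancel' (Nat.lt_succ_iff.mp (mem_range.mp hk))]
        ring
    _ = ∑ k ∈ range (n + 1), n.choose k * f k *
          ∑ i ∈ range (n - k + 1), b ^ i * c ^ (n - k - i) * (n - k).choose i := by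
        rw [sum_range_diag_flip (n + 1) fun k i =>
          (n.choose (k + i) * (k + i).choose k : R) * f k * b ^ i * c ^ (n - k - i)]
        refine sum_congr rfl fun k hk => ?_
        rw [mul_sum, Nat.sub_add_comm (Nat.lt_succ_iff.mp (mem_range.mp hk))]
        refine sum_congr rfl fun i _ => ?_
        rw [hchoose k i]
        ring
    _ = binomialTransform (b + c) f n := by
        simp only [binomialTransform, add_pow]

end BinomialTransform

theorem binomialTransform_sub {R : Type*} [CommRing R] (c : R) (f g : ℕ → R) (n : ℕ) :
    binomialTransform c (fun k => f k - g k) n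
      = binomialTransform c f n - binomialTransform c g n := by
  simp only [binomialTransform, ← sum_sub_distrib]
  exact sum_congr rfl fun _ _ => by ring

open Nat in
theorem stirling2_eq_stirlingSecond : ∀ n k, stirling2 n k = stirlingSecond n k
  | 0, 0 | 0, _ + 1 | _ + 1, 0 => rfl
  | n + 1, k + 1 => by
    rw [stirling2, stirlingSecond_succ_succ, stirling2_eq_stirlingSecond n,
      stirling2_eq_stirlingSecond n]

def surjCount (n k : ℕ) : ℕ := k.factorial * Nat.stirlingSecond n k

theorem surjCount_zero_right (n : ℕ) : surjCount n 0 = 0 ^ n := by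
  cases n <;> rfl

theorem surjCount_succ_succ (n k : ℕ) :
    surjCount (n + 1) (k + 1) = (k + 1) * (surjCount n (k + 1) + surjCount n k) := by
  simp only [surjCount, Nat.stirlingSecond_succ_succ, Nat.factorial_succ]
  ring

theorem surjCount_eq_zero_of_lt {n k : ℕ} (h : n < k) : surjCount n k = 0 := by
  rw [surjCount, Nat.stirlingSecond_eq_zero_of_lt h, mul_zero]

/-- Both sides count the maps from an `n`-set to a `(k + 1)`-set whose image contains the first
`k` points; on the left they are sorted by the preimage of those points. -/
theorem sum_choose_mul_surjCount (n k : ℕ) :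
    ∑ j ∈ range (n + 1), n.choose j * surjCount j k = surjCount n (k + 1) + surjCount n k := by
  induction n generalizing k with
  | zero => simp [surjCount_eq_zero_of_lt]
  | succ n ih =>
    have hpascal := sum_choose_succ_mul (R := ℕ) (fun j _ => surjCount j k) n
    simp only [Nat.cast_id] at hpascal
    rw [hpascal, ih]
    cases k with
    | zero => simp [surjCount_zero_right, surjCount_succ_succ n 0]
    | succ k =>
      simp only [surjCount_succ_succ, mul_add, sum_add_distrib, mul_left_comm _ (k + 1),
        ← mul_sum, ih]
      ring

theorem w_eq_sum_surjCount {n N : ℕ} (h : n < N) (y : ℝ) :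
    w n y = ∑ k ∈ range N, (surjCount n k : ℝ) * y ^ k := by
  rw [w]
  refine sum_subset_zero_on_sdiff (range_subset_range.mpr h) (fun k hk => ?_) (fun k _ => ?_)
  · rw [surjCount_eq_zero_of_lt (by simp at hk; omega)]; simp
  · simp [surjCount, stirling2_eq_stirlingSecond]

theorem mul_sum_choose_mul_w (n : ℕ) (y : ℝ) :
    y * ∑ j ∈ range (n + 1), n.choose j * w j y = (1 + y) * w n y - 0 ^ n := by
  have hswap : ∑ j ∈ range (n + 1), n.choose j * w j y
      = ∑ k ∈ range (n + 1), ((surjCount n (k + 1) : ℝ) + surjCount n k) * y ^ k := by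
    simp_rw [← Nat.cast_add, ← sum_choose_mul_surjCount, Nat.cast_sum, Nat.cast_mul, sum_mul]
    rw [sum_comm]
    refine sum_congr rfl fun j hj => ?_
    rw [w_eq_sum_surjCount (mem_range.mp hj), mul_sum]
    exact sum_congr rfl fun k _ => by ring
  have hshift :
      ∑ k ∈ range (n + 1), (surjCount n (k + 1) : ℝ) * y ^ (k + 1) = w n y - 0 ^ n := by
    rw [w_eq_sum_surjCount (N := n + 2) (by omega), sum_range_succ' _ (n + 1), surjCount_zero_right]
    push_cast
    ring
  calc y * ∑ j ∈ range (n + 1), n.choose j * w j y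
      = ∑ k ∈ range (n + 1), (surjCount n (k + 1) : ℝ) * y ^ (k + 1)
          + y * ∑ k ∈ range (n + 1), (surjCount n k : ℝ) * y ^ k := by
        rw [hswap, mul_sum, mul_sum, ← sum_add_distrib]
        exact sum_congr rfl fun _ _ => by ring
    _ = (1 + y) * w n y - 0 ^ n := by
        rw [← w_eq_sum_surjCount (Nat.lt_succ_self n), hshift]
        ring

theorem Ft_eq_binomialTransform (m a : ℝ) (n : ℕ) (x : ℝ) :
    Ft m a n x = binomialTransform (-a) (fun k => m ^ k * w k (x / m)) n := by
  simp only [Ft, binomialTransform, mul_assoc]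

theorem mul_binomialTransform_pow_mul_w (m y : ℝ) (j : ℕ) :
    m * y * binomialTransform m (fun k => m ^ k * w k y) j
      = (m + m * y) * (m ^ j * w j y) - m * 0 ^ j := by
  have hsum : binomialTransform m (fun k => m ^ k * w k y) j
      = m ^ j * ∑ k ∈ range (j + 1), j.choose k * w k y := by
    rw [binomialTransform, mul_sum]
    refine sum_congr rfl fun k hk => ?_
    rw [← pow_mul_pow_sub m (Nat.lt_succ_iff.mp (mem_range.mp hk))]
    ring
  have hzero : m ^ j * 0 ^ j = (0 : ℝ) ^ j := by rw [← mul_pow, mul_zero]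
  rw [hsum, mul_left_comm, mul_assoc, mul_sum_choose_mul_w]
  linear_combination (-m) * hzero

theorem stmt5 (n : ℕ) (m a x : ℝ) (hm : m ≠ 0) :
    x * Ft m (a - m) n x = (m + x) * Ft m a n x - (-a) ^ n * m := by
  set f : ℕ → ℝ := fun k => m ^ k * w k (x / m)
  have hx : m * (x / m) = x := mul_div_cancel₀ x hm
  have key (j : ℕ) : x * binomialTransform m f j = (m + x) * f j - m * 0 ^ j := by
    simpa only [hx] using mul_binomialTransform_pow_mul_w m (x / m) j
  calc x * Ft m (a - m) n x = x * binomialTransform (m + -a) f n := by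
        rw [Ft_eq_binomialTransform, neg_sub, sub_eq_add_neg]
    _ = binomialTransform (-a) (fun j => x * binomialTransform m f j) n := by
        rw [binomialTransform_mul_left, binomialTransform_binomialTransform]
    _ = binomialTransform (-a) (fun j => (m + x) * f j - m * 0 ^ j) n := by
        simp only [key]
    _ = (m + x) * Ft m a n x - (-a) ^ n * m := by
        rw [binomialTransform_sub, binomialTransform_mul_left, binomialTransform_mul_left,
          binomialTransform_pow, zero_add, Ft_eq_binomialTransform]
        ring
end

section
/- Let F̃_{m,a}(n;x) = ∑_{k=0}^{n} C(n,k) * m^k * w_k(x/m) * (-a)^{n-k} with m ≠ 0. Then for all natural n, real m ≠ 0, a₁, a₂, and real x₁ ≠ x₂: (x₂ - x₁) * ∑_{k=0}^{n} C(n,k) * F̃_{m,a₁}(k;x₁) * F̃_{m,a₂}(n-k;x₂) = x₂ * F̃_{m,a₁+a₂}(n;x₂) - x₁ * F̃_{m,a₁+a₂}(n;x₁). -/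
open Finset

/-! With `egf f = ∑ f n tⁿ / n!`, binomial convolution becomes multiplication of power series.
The Stirling recurrence makes the EGF `W_y` of `w_k(y)` satisfy `W_y = 1 + y (eᵗ - 1) W_y`
(so `W_y = 1 / (1 - y (eᵗ - 1))`); rescaling `t ↦ m t` gives `G_x = 1 + x D G_x` for the EGF `G_x`
of `m^k w_k(x / m)`, where `D = (e^{mt} - 1) / m`, and `Ft_{m,a}(·; x)` has EGF `G_x e^{-at}`.
The theorem is the coefficient form of the resolvent identity
`(x₂ - x₁) G_{x₁} G_{x₂} = x₂ G_{x₂} - x₁ G_{x₁}`, multiplied by `e^{-a₁t} e^{-a₂t} = e^{-(a₁+a₂)t}`. -/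

open PowerSeries

@[simp]
lemma PowerSeries.rescale_C {R : Type*} [CommSemiring R] (a c : R) : rescale a (C c) = C c := by
  ext (_ | n) <;> simp [coeff_rescale, coeff_C]

section ExponentialGeneratingFunction

variable {K : Type*} [Field K]

noncomputable def egf (f : ℕ → K) : K⟦X⟧ := mk fun n => f n / n.factorial

@[simp]
lemma coeff_egf (f : ℕ → K) (n : ℕ) : coeff n (egf f) = f n / n.factorial := coeff_mk n _

lemma rescale_egf (c : K) (f : ℕ → K) : rescale c (egf f) = egf fun n => c ^ n * f n := by
  ext n
  simp [coeff_rescale, mul_div_assoc]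

variable [CharZero K]

lemma egf_mul (f g : ℕ → K) :
    egf f * egf g = egf fun n => ∑ k ∈ range (n + 1), (n.choose k : K) * f k * g (n - k) := by
  ext n
  rw [coeff_mul, Nat.sum_antidiagonal_eq_sum_range_succ_mk, coeff_egf, sum_div]
  refine sum_congr rfl fun k hk => ?_
  have hkn : k ≤ n := Nat.lt_succ_iff.mp (mem_range.mp hk)
  have hn : (n.factorial : K) ≠ 0 := Nat.cast_ne_zero.mpr n.factorial_ne_zero
  rw [coeff_egf, coeff_egf, Nat.cast_choose K hkn]
  field_simp

lemma egf_pow (c : K) : (egf fun n => c ^ n) = rescale c (exp K) := by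
  ext n
  simp [coeff_rescale, coeff_exp, div_eq_mul_inv]

end ExponentialGeneratingFunction

lemma resolvent_identity {R : Type*} [CommRing R] {p g₁ g₂ y₁ y₂ : R}
    (h₁ : g₁ = 1 + y₁ * p * g₁) (h₂ : g₂ = 1 + y₂ * p * g₂) :
    (y₂ - y₁) * (g₁ * g₂) = y₂ * g₂ - y₁ * g₁ := by
  linear_combination y₂ * g₂ * h₁ - y₁ * g₁ * h₂

lemma stirling2_eq_stirlingSecond_s10 : stirling2 = Nat.stirlingSecond := by
  funext n k
  induction n generalizing k with
  | zero => cases k <;> rfl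
  | succ n ih => cases k <;> simp [stirling2, Nat.stirlingSecond_succ_succ, ih]

namespace Nat

lemma stirlingSecond_succ_succ_eq_sum (n j : ℕ) :
    stirlingSecond (n + 1) (j + 1) = ∑ i ∈ range (n + 1), n.choose i * stirlingSecond i j := by
  induction n generalizing j with
  | zero => simp [stirlingSecond_succ_succ]
  | succ n ih =>
    have pascal := Finset.sum_choose_succ_nsmul (fun i _ => stirlingSecond i j) n
    simp only [smul_eq_mul] at pascal
    rw [pascal, ← ih, stirlingSecond_succ_succ]
    cases j with
    | zero => simp
    | succ j =>
      simp only [stirlingSecond_succ_succ, mul_add, sum_add_distrib, mul_left_comm _ (j + 1),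
        ← mul_sum, ← ih]
      ring

lemma succ_mul_stirlingSecond_succ_succ (n j : ℕ) :
    (j + 1) * stirlingSecond (n + 1) (j + 1) =
      ∑ i ∈ range (n + 1), (n + 1).choose i * stirlingSecond i j := by
  have h := stirlingSecond_succ_succ_eq_sum (n + 1) j
  rw [sum_range_succ, Nat.choose_self, one_mul, stirlingSecond_succ_succ] at h
  omega

end Nat

lemma w_eq_sum_range {n N : ℕ} (h : n < N) (y : ℝ) :
    w n y = ∑ j ∈ range N, (j.factorial : ℝ) * Nat.stirlingSecond n j * y ^ j := by
  rw [w, stirling2_eq_stirlingSecond_s10]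
  refine sum_subset (range_subset_range.mpr h) fun j _ hj => ?_
  rw [Nat.stirlingSecond_eq_zero_of_lt (by simpa using hj), Nat.cast_zero, mul_zero, zero_mul]

lemma w_succ (n : ℕ) (y : ℝ) :
    w (n + 1) y = y * ∑ k ∈ range (n + 1), ((n + 1).choose k : ℝ) * w k y := by
  have hrec (j : ℕ) : ((j + 1).factorial : ℝ) * Nat.stirlingSecond (n + 1) (j + 1) =
      j.factorial * ∑ k ∈ range (n + 1), ((n + 1).choose k : ℝ) * Nat.stirlingSecond k j := by
    rw [Nat.factorial_succ, Nat.cast_mul, mul_comm ((j + 1 : ℕ) : ℝ), mul_assoc]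
    exact_mod_cast congrArg (j.factorial * ·) (Nat.succ_mul_stirlingSecond_succ_succ n j)
  calc w (n + 1) y
      = ∑ j ∈ range (n + 1),
          ((j + 1).factorial : ℝ) * Nat.stirlingSecond (n + 1) (j + 1) * y ^ (j + 1) := by
        rw [w_eq_sum_range (Nat.lt_succ_self _), sum_range_succ']
        simp
    _ = y * ∑ j ∈ range (n + 1), ∑ k ∈ range (n + 1),
          ((n + 1).choose k : ℝ) * ((j.factorial : ℝ) * Nat.stirlingSecond k j * y ^ j) := by
        rw [mul_sum]
        refine sum_congr rfl fun j _ => ?_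
        rw [hrec, mul_sum, sum_mul, mul_sum]
        refine sum_congr rfl fun k _ => ?_
        ring
    _ = y * ∑ k ∈ range (n + 1), ((n + 1).choose k : ℝ) * w k y := by
        rw [sum_comm]
        refine congrArg (y * ·) (sum_congr rfl fun k hk => ?_)
        rw [w_eq_sum_range (mem_range.mp hk), mul_sum]

lemma egf_w_eq_one_add (y : ℝ) : egf (w · y) = 1 + C y * (exp ℝ - 1) * egf (w · y) := by
  have hconv : (exp ℝ - 1) * egf (w · y) =
      egf fun n => ∑ k ∈ range n, (n.choose k : ℝ) * w k y := by
    have hexp : exp ℝ = egf fun n => (1 : ℝ) ^ n := by rw [egf_pow, rescale_one, RingHom.id_apply]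
    rw [hexp, sub_mul, one_mul, mul_comm, egf_mul]
    ext n
    simp [sum_range_succ, add_div]
  rw [mul_assoc, hconv]
  ext (_ | n)
  · rw [coeff_egf, map_add, coeff_C_mul, coeff_egf, coeff_one]
    simp [w, stirling2]
  · simp [w_succ, mul_div_assoc]

lemma egf_Ft_eq (m a x : ℝ) :
    egf (Ft m a · x) = rescale m (egf (w · (x / m))) * rescale (-a) (exp ℝ) := by
  rw [rescale_egf, ← egf_pow, egf_mul]
  congr 1
  funext n
  refine sum_congr rfl fun k _ => ?_
  ring

theorem stmt10_general (n : ℕ) (m a₁ a₂ x₁ x₂ : ℝ) :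
    (x₂ - x₁) * ∑ k ∈ range (n + 1), (n.choose k : ℝ) * Ft m a₁ k x₁ * Ft m a₂ (n - k) x₂
      = x₂ * Ft m (a₁ + a₂) n x₂ - x₁ * Ft m (a₁ + a₂) n x₁ := by
  set G : ℝ → ℝ⟦X⟧ := fun x => rescale m (egf (w · (x / m)))
  set E : ℝ → ℝ⟦X⟧ := fun a => rescale (-a) (exp ℝ)
  have hG (x : ℝ) : G x = 1 + C x * (C m⁻¹ * (rescale m (exp ℝ) - 1)) * G x := by
    simp only [G]
    conv_lhs => rw [egf_w_eq_one_add]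
    rw [map_add, map_one, map_mul, map_mul, map_sub, map_one, rescale_C, div_eq_mul_inv, map_mul]
    ring
  have key : C (x₂ - x₁) * (G x₁ * E a₁ * (G x₂ * E a₂)) =
      C x₂ * (G x₂ * E (a₁ + a₂)) - C x₁ * (G x₁ * E (a₁ + a₂)) := by
    have hE : E (a₁ + a₂) = E a₁ * E a₂ := by
      simp only [E, neg_add, exp_mul_exp_eq_exp_add]
    rw [hE, map_sub]
    linear_combination E a₁ * E a₂ * resolvent_identity (hG x₁) (hG x₂)
  rw [← egf_Ft_eq, ← egf_Ft_eq, ← egf_Ft_eq, ← egf_Ft_eq, egf_mul] at key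
  have hn : (n.factorial : ℝ) ≠ 0 := Nat.cast_ne_zero.mpr n.factorial_ne_zero
  have hcoeff := congrArg (coeff n) key
  simp only [map_sub, sub_mul, coeff_C_mul, coeff_egf] at hcoeff
  field_simp at hcoeff
  linear_combination hcoeff

theorem stmt10 (n : ℕ) (m a₁ a₂ x₁ x₂ : ℝ) (hm : m ≠ 0) (hx : x₁ ≠ x₂) :
    (x₂ - x₁) * ∑ k ∈ range (n + 1), (n.choose k : ℝ) * Ft m a₁ k x₁ * Ft m a₂ (n - k) x₂
      = x₂ * Ft m (a₁ + a₂) n x₂ - x₁ * Ft m (a₁ + a₂) n x₁ :=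
  stmt10_general n m a₁ a₂ x₁ x₂
end

section
/- Define W̃_{m,a}(n,k) = ∑_{j=k}^{n} C(n,j) * (-a)^{n-j} * m^{j-k} * S(j,k) and F̃_{m,a}(n;x) = ∑_{k=0}^{n} k! * W̃_{m,a}(n,k) * x^k. Then for all natural n, real m, a, x with m + x ≠ 0: F̃_{m,a}(n;x) = x * ∑_{k=0}^{n} (-1)^{n+k} * k! * W̃_{m,-a}(n,k) * (m+x)^{k-1} + (-a)^n * m / (m+x). -/
/-!
Expanding `Wt` and exchanging the sums turns `F̃_{m,a}(n; x)` into the binomial transform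
`∑ⱼ C(n,j) (-a)^(n-j) A_j(x)` of the polynomials `A_j(x) = ∑ₖ k! S(j,k) m^(j-k) xᵏ`, and the
right-hand side into `(-1)^n x F̃_{m,-a}(n; -(m+x)) / (m+x)`. The theorem then follows from the
reflection identity `(m + x) A_j(x) = (-1)^j x A_j(-m-x) + [j = 0] m`, proved by induction on `j`:
the Stirling recurrence says `A_{j+1} = X ((m + X) A_j' + A_j)`, and differentiating the identity
for `j` gives the one for `j + 1`.
-/

open Finset

noncomputable def Wt (m a : ℝ) (n k : ℕ) : ℝ :=
  ∑ j ∈ Icc k n, (n.choose j : ℝ) * (-a) ^ (n - j) * m ^ (j - k) * (stirling2 j k : ℝ)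

noncomputable def FtW (m a : ℝ) (n : ℕ) (x : ℝ) : ℝ :=
  ∑ k ∈ range (n + 1), (k.factorial : ℝ) * Wt m a n k * x ^ k

open Polynomial

theorem stirling2_eq_zero_of_lt : ∀ {j k : ℕ}, j < k → stirling2 j k = 0
  | 0, _ + 1, _ => rfl
  | j + 1, k + 1, h => by
    simp [stirling2, stirling2_eq_zero_of_lt (by omega : j < k + 1),
      stirling2_eq_zero_of_lt (by omega : j < k)]

theorem coeff_X_mul_derivative {R : Type*} [CommSemiring R] (p : R[X]) (i : ℕ) :
    (X * derivative p).coeff i = i * p.coeff i := by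
  cases i with
  | zero => simp
  | succ i => rw [coeff_X_mul, coeff_derivative]; push_cast; ring

/-- `m ^ j * ω_j (X / m)`, where `ω_j = ∑ₖ k! S(j,k) Xᵏ` is the `j`-th geometric polynomial;
written in this form it also makes sense at `m = 0`. -/
noncomputable def geomPoly (m : ℝ) (j : ℕ) : ℝ[X] :=
  ∑ k ∈ range (j + 1), C ((k.factorial : ℝ) * stirling2 j k * m ^ (j - k)) * X ^ k

theorem coeff_geomPoly (m : ℝ) (j k : ℕ) :
    (geomPoly m j).coeff k = k.factorial * stirling2 j k * m ^ (j - k) := by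
  simp only [geomPoly, finsetSum_coeff, coeff_C_mul_X_pow, sum_ite_eq, mem_range]
  split_ifs with hk
  · rfl
  · simp [stirling2_eq_zero_of_lt (by omega : j < k)]

theorem eval_geomPoly (m x : ℝ) (j : ℕ) :
    (geomPoly m j).eval x
      = ∑ k ∈ range (j + 1), k.factorial * stirling2 j k * m ^ (j - k) * x ^ k := by
  simp [geomPoly, eval_finsetSum]

theorem geomPoly_zero (m : ℝ) : geomPoly m 0 = 1 := by
  simp [geomPoly, stirling2]

theorem geomPoly_succ (m : ℝ) (j : ℕ) :
    geomPoly m (j + 1) = X * ((C m + X) * derivative (geomPoly m j) + geomPoly m j) := by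
  ext (_ | i)
  · simp [coeff_geomPoly, stirling2]
  · rw [coeff_X_mul, add_mul, coeff_add, coeff_add, coeff_C_mul, coeff_derivative,
      coeff_X_mul_derivative]
    simp only [coeff_geomPoly, stirling2, Nat.factorial_succ]
    rcases lt_or_ge j (i + 1) with hj | hj
    · simp [stirling2_eq_zero_of_lt hj, Nat.sub_eq_zero_of_le (Nat.le_of_lt_succ hj)]
      ring
    · rw [show j + 1 - (i + 1) = j - (i + 1) + 1 by omega, show j - i = j - (i + 1) + 1 by omega]
      push_cast
      ring

theorem geomPoly_reflect (m : ℝ) (j : ℕ) :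
    (C m + X) * geomPoly m j
      = C ((-1) ^ j) * (X * (geomPoly m j).comp (-C m - X)) + if j = 0 then C m else 0 := by
  induction j with
  | zero => simp [geomPoly_zero]; ring
  | succ j ih =>
    have hd := congrArg derivative ih
    simp only [derivative_mul, derivative_add, derivative_C, derivative_X, derivative_comp,
      derivative_sub, derivative_neg, apply_ite derivative, derivative_zero,
      ite_self, zero_mul, one_mul, zero_add, add_zero] at hd
    rw [geomPoly_succ, pow_succ, C_mul, C_neg, C_1]
    simp only [mul_comp, add_comp, X_comp, C_comp, if_neg j.succ_ne_zero, add_zero]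
    linear_combination (X * (C m + X)) * hd

theorem eval_geomPoly_reflect (m x : ℝ) (j : ℕ) :
    (m + x) * (geomPoly m j).eval x
      = (-1) ^ j * x * (geomPoly m j).eval (-(m + x)) + if j = 0 then m else 0 := by
  have h := congrArg (eval x) (geomPoly_reflect m j)
  simp only [eval_mul, eval_add, eval_C, eval_X, eval_comp, eval_sub, eval_neg,
    apply_ite (eval x), eval_zero] at h
  rw [h, neg_add', mul_assoc]

theorem FtW_eq_sum_choose_mul_eval_geomPoly (m a x : ℝ) (n : ℕ) :
    FtW m a n x = ∑ j ∈ range (n + 1), n.choose j * (-a) ^ (n - j) * (geomPoly m j).eval x := by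
  simp only [FtW, Wt, eval_geomPoly, mul_sum, sum_mul]
  refine (sum_comm' fun k j ↦ ?_).trans <| sum_congr rfl fun j _ ↦ sum_congr rfl fun k _ ↦ by ring
  simp only [mem_range, mem_Icc]
  omega

theorem add_mul_FtW_reflect (m a x : ℝ) (n : ℕ) :
    (m + x) * FtW m a n x = (-1) ^ n * x * FtW m (-a) n (-(m + x)) + (-a) ^ n * m := by
  have hconst : (-a) ^ n * m
      = ∑ j ∈ range (n + 1), if j = 0 then n.choose j * (-a) ^ (n - j) * m else 0 := by
    simp
  simp only [FtW_eq_sum_choose_mul_eval_geomPoly, mul_sum, hconst, ← sum_add_distrib]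
  refine sum_congr rfl fun j hj ↦ ?_
  have hsign : (-1 : ℝ) ^ n * (-(-a)) ^ (n - j) = (-a) ^ (n - j) * (-1) ^ j := by
    rw [← Nat.sub_add_cancel (mem_range_succ_iff.mp hj), neg_pow a, pow_add]
    simp only [Nat.add_sub_cancel, neg_neg]
    ring
  rw [mul_left_comm, eval_geomPoly_reflect]
  split_ifs <;> linear_combination (-x * (geomPoly m j).eval (-(m + x)) * n.choose j) * hsign

theorem stmt13 (n : ℕ) (m a x : ℝ) (h : m + x ≠ 0) :
    FtW m a n x
      = x * ∑ k ∈ range (n + 1),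
          (-1) ^ (n + k) * (k.factorial : ℝ) * Wt m (-a) n k * (m + x) ^ ((k : ℤ) - 1)
        + (-a) ^ n * m / (m + x) := by
  have hsum : ∑ k ∈ range (n + 1),
      (-1) ^ (n + k) * (k.factorial : ℝ) * Wt m (-a) n k * (m + x) ^ ((k : ℤ) - 1)
        = (-1) ^ n * FtW m (-a) n (-(m + x)) / (m + x) := by
    simp only [FtW, mul_sum, sum_div]
    refine sum_congr rfl fun k _ ↦ ?_
    rw [zpow_sub_one₀ h, zpow_natCast, neg_pow (m + x), pow_add]
    ring
  rw [hsum]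
  field_simp
  linear_combination add_mul_FtW_reflect m a x n
end
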